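/- For a syntactic guarantee formula ι (generated by the φ_G grammar rule), every state φ of the automaton D_ι other than the state true that belongs to a non-trivial SCC satisfies λ(φ) = ⊥. Dually, for a syntactic safety formula ι, every state other than false belonging to a non-trivial SCC satisfies λ(φ) = ⊤. -/

import Mathlib

/-!
Every state of `D_ι` other than `ι`, `tt` and `ff` is an iterated unfolding of `ι`, and
unfolding preserves the guarantee and safety fragments as well as the absence of proper
constant subformulas. On a nonconstant guarantee formula of this kind, `λ` is `⊥` unless the
formula is purely Boolean (it then has the wildcard value), and dually for safety.
A purely Boolean state cannot lie on a cycle: every unfolding of a Boolean formula strips one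
level of `X` or makes it constant, so following the cycle often enough shows the state to be
propositionally equivalent to `tt` or `ff`; since representatives are canonical and the
constants represent themselves, the state is that constant.
-/

/-- LTL formulas over atomic propositions `P`. -/
inductive LTL (P : Type) : Type
  | tt : LTL P
  | ff : LTL P
  | atom : P → LTL P
  | not : LTL P → LTL P
  | and : LTL P → LTL P → LTL P
  | or : LTL P → LTL P → LTL P
  | imp : LTL P → LTL P → LTL P
  | iff : LTL P → LTL P → LTL P
  | xor : LTL P → LTL P → LTL P
  | next : LTL P → LTL P
  | until_ : LTL P → LTL P → LTL P
  | wuntil : LTL P → LTL P → LTL P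
  | muntil : LTL P → LTL P → LTL P
  | release : LTL P → LTL P → LTL P
  | ev : LTL P → LTL P
  | always : LTL P → LTL P

namespace LTL

variable {P : Type}

/-- Negation with constant folding. -/
def mkNot : LTL P → LTL P
  | .tt => .ff
  | .ff => .tt
  | φ => .not φ

/-- Conjunction with constant folding. -/
def mkAnd : LTL P → LTL P → LTL P
  | .tt, β => β
  | .ff, _ => .ff
  | α, .tt => α
  | _, .ff => .ff
  | α, β => .and α β

/-- Disjunction with constant folding. -/
def mkOr : LTL P → LTL P → LTL P
  | .tt, _ => .tt
  | .ff, β => β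
  | _, .tt => .tt
  | α, .ff => α
  | α, β => .or α β

/-- Implication with constant folding. -/
def mkImp : LTL P → LTL P → LTL P
  | .ff, _ => .tt
  | .tt, β => β
  | _, .tt => .tt
  | α, .ff => mkNot α
  | α, β => .imp α β

/-- Equivalence with constant folding. -/
def mkIff : LTL P → LTL P → LTL P
  | .tt, β => β
  | .ff, β => mkNot β
  | α, .tt => α
  | α, .ff => mkNot α
  | α, β => .iff α β

/-- Exclusive or with constant folding. -/
def mkXor : LTL P → LTL P → LTL P
  | .tt, β => mkNot β
  | .ff, β => β
  | α, .tt => mkNot α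
  | α, .ff => α
  | α, β => .xor α β

/-- The syntactic successor (local unfolding) of a formula under an
assignment `v` of the atomic propositions. -/
def succ (v : P → Bool) : LTL P → LTL P
  | .tt => .tt
  | .ff => .ff
  | .atom p => if v p then .tt else .ff
  | .not φ => mkNot (succ v φ)
  | .and α β => mkAnd (succ v α) (succ v β)
  | .or α β => mkOr (succ v α) (succ v β)
  | .imp α β => mkImp (succ v α) (succ v β)
  | .iff α β => mkIff (succ v α) (succ v β)
  | .xor α β => mkXor (succ v α) (succ v β)
  | .next φ => φ
  | .until_ α β => mkOr (succ v β) (mkAnd (succ v α) (.until_ α β))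
  | .wuntil α β => mkOr (succ v β) (mkAnd (succ v α) (.wuntil α β))
  | .muntil α β => mkAnd (succ v β) (mkOr (succ v α) (.muntil α β))
  | .release α β => mkAnd (succ v β) (mkOr (succ v α) (.release α β))
  | .ev φ => mkOr (succ v φ) (.ev φ)
  | .always φ => mkAnd (succ v φ) (.always φ)

/-- Boolean evaluation of a formula where every maximal temporal subformula
(and every atomic proposition) is treated as an opaque Boolean variable,
interpreted by `ν`. -/
def evalB (ν : LTL P → Prop) : LTL P → Prop
  | .tt => True
  | .ff => False
  | .not φ => ¬ evalB ν φ
  | .and α β => evalB ν α ∧ evalB ν β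
  | .or α β => evalB ν α ∨ evalB ν β
  | .imp α β => evalB ν α → evalB ν β
  | .iff α β => evalB ν α ↔ evalB ν β
  | .xor α β => ¬ (evalB ν α ↔ evalB ν β)
  | φ => ν φ

/-- Propositional equivalence: the Boolean abstractions (with maximal
temporal subformulas replaced by variables) are logically equivalent. -/
def PropEquiv (α β : LTL P) : Prop := ∀ ν : LTL P → Prop, evalB ν α ↔ evalB ν β

/-! Three-valued acceptance values `some true = ⊤`, `some false = ⊥`,
`none = *` (wildcard), with the wildcard-absorption tables of the paper. -/

def obNot : Option Bool → Option Bool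
  | none => none
  | some b => some (!b)

def obAnd : Option Bool → Option Bool → Option Bool
  | some a, some b => some (a && b)
  | some a, none => some a
  | none, some b => some b
  | none, none => none

def obOr : Option Bool → Option Bool → Option Bool
  | some a, some b => some (a || b)
  | some a, none => some a
  | none, some b => some b
  | none, none => none

def obXor : Option Bool → Option Bool → Option Bool
  | some a, some b => some (a != b)
  | some _, none => some true
  | none, some _ => some true
  | none, none => none

def obIff : Option Bool → Option Bool → Option Bool
  | some a, some b => some (a == b)
  | some _, none => some true
  | none, some _ => some true
  | none, none => none

def obImp : Option Bool → Option Bool → Option Bool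
  | some a, some b => some (!a || b)
  | some true, none => some false
  | some false, none => some true
  | none, some b => some b
  | none, none => none

/-- The acceptance function λ : strong operators (F, U, M) are rejecting (⊥),
weak operators (G, W, R) are accepting (⊤), atoms are wildcards (*),
Boolean connectives are combined with wildcard absorption. -/
def lam : LTL P → Option Bool
  | .tt => some true
  | .ff => some false
  | .atom _ => none
  | .not φ => obNot (lam φ)
  | .and α β => obAnd (lam α) (lam β)
  | .or α β => obOr (lam α) (lam β)
  | .imp α β => obImp (lam α) (lam β)
  | .iff α β => obIff (lam α) (lam β)
  | .xor α β => obXor (lam α) (lam β)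
  | .next φ => lam φ
  | .until_ _ _ => some false
  | .muntil _ _ => some false
  | .ev _ => some false
  | .wuntil _ _ => some true
  | .release _ _ => some true
  | .always _ => some true

def IsConst : LTL P → Prop
  | .tt => True
  | .ff => True
  | _ => False

/-- `tt` and `ff` never occur as proper subformulas. -/
def NoConst : LTL P → Prop
  | .not φ => ¬ IsConst φ ∧ NoConst φ
  | .and α β => (¬ IsConst α ∧ NoConst α) ∧ (¬ IsConst β ∧ NoConst β)
  | .or α β => (¬ IsConst α ∧ NoConst α) ∧ (¬ IsConst β ∧ NoConst β)
  | .imp α β => (¬ IsConst α ∧ NoConst α) ∧ (¬ IsConst β ∧ NoConst β)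
  | .iff α β => (¬ IsConst α ∧ NoConst α) ∧ (¬ IsConst β ∧ NoConst β)
  | .xor α β => (¬ IsConst α ∧ NoConst α) ∧ (¬ IsConst β ∧ NoConst β)
  | .next φ => ¬ IsConst φ ∧ NoConst φ
  | .until_ α β => (¬ IsConst α ∧ NoConst α) ∧ (¬ IsConst β ∧ NoConst β)
  | .wuntil α β => (¬ IsConst α ∧ NoConst α) ∧ (¬ IsConst β ∧ NoConst β)
  | .muntil α β => (¬ IsConst α ∧ NoConst α) ∧ (¬ IsConst β ∧ NoConst β)
  | .release α β => (¬ IsConst α ∧ NoConst α) ∧ (¬ IsConst β ∧ NoConst β)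
  | .ev φ => ¬ IsConst φ ∧ NoConst φ
  | .always φ => ¬ IsConst φ ∧ NoConst φ
  | _ => True

/-- The "bottom" class `φ_B`: Boolean combinations of atomic propositions,
constants, possibly with `X`. -/
inductive IsB : LTL P → Prop
  | tt : IsB .tt
  | ff : IsB .ff
  | atom (p : P) : IsB (.atom p)
  | not {φ} : IsB φ → IsB (.not φ)
  | and {α β} : IsB α → IsB β → IsB (.and α β)
  | or {α β} : IsB α → IsB β → IsB (.or α β)
  | imp {α β} : IsB α → IsB β → IsB (.imp α β)
  | iff {α β} : IsB α → IsB β → IsB (.iff α β)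
  | xor {α β} : IsB α → IsB β → IsB (.xor α β)
  | next {φ} : IsB φ → IsB (.next φ)

mutual
/-- Syntactic guarantee formulas `φ_G`. -/
inductive IsG : LTL P → Prop
  | ofB {φ} : IsB φ → IsG φ
  | notS {φ} : IsS φ → IsG (.not φ)
  | and {α β} : IsG α → IsG β → IsG (.and α β)
  | or {α β} : IsG α → IsG β → IsG (.or α β)
  | impS {α β} : IsS α → IsG β → IsG (.imp α β)
  | next {φ} : IsG φ → IsG (.next φ)
  | ev {φ} : IsG φ → IsG (.ev φ)
  | until_ {α β} : IsG α → IsG β → IsG (.until_ α β)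
  | muntil {α β} : IsG α → IsG β → IsG (.muntil α β)

/-- Syntactic safety formulas `φ_S`. -/
inductive IsS : LTL P → Prop
  | ofB {φ} : IsB φ → IsS φ
  | notG {φ} : IsG φ → IsS (.not φ)
  | and {α β} : IsS α → IsS β → IsS (.and α β)
  | or {α β} : IsS α → IsS β → IsS (.or α β)
  | impG {α β} : IsG α → IsS β → IsS (.imp α β)
  | next {φ} : IsS φ → IsS (.next φ)
  | always {φ} : IsS φ → IsS (.always φ)
  | release {α β} : IsS α → IsS β → IsS (.release α β)
  | wuntil {α β} : IsS α → IsS β → IsS (.wuntil α β)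
end

/-- Syntactic obligation formulas `φ_O`. -/
inductive IsO : LTL P → Prop
  | ofG {φ} : IsG φ → IsO φ
  | ofS {φ} : IsS φ → IsO φ
  | not {φ} : IsO φ → IsO (.not φ)
  | and {α β} : IsO α → IsO β → IsO (.and α β)
  | or {α β} : IsO α → IsO β → IsO (.or α β)
  | imp {α β} : IsO α → IsO β → IsO (.imp α β)
  | iff {α β} : IsO α → IsO β → IsO (.iff α β)
  | xor {α β} : IsO α → IsO β → IsO (.xor α β)
  | next {φ} : IsO φ → IsO (.next φ)
  | untilG {α β} : IsO α → IsG β → IsO (.until_ α β)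
  | releaseS {α β} : IsO α → IsS β → IsO (.release α β)
  | wuntilO {α β} : IsS α → IsO β → IsO (.wuntil α β)
  | muntilO {α β} : IsG α → IsO β → IsO (.muntil α β)

/-- Raw successor relation (no quotienting). -/
def StepRaw (α β : LTL P) : Prop := ∃ v : P → Bool, succ v α = β

/-- Successor relation of the construction: the raw successor is replaced by
the representative `rep` of its propositional-equivalence class. -/
def StepRep (rep : LTL P → LTL P) (α β : LTL P) : Prop :=
  ∃ v : P → Bool, rep (succ v α) = β

/-- Hypotheses making `rep` a legitimate choice of representatives of
propositional-equivalence classes for the automaton `D_ι`: `rep` picks a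
propositionally equivalent formula, constantly on each class, the constants
are canonical, and every state of `D_ι` is (except for `ι` and the constants)
a formula actually produced by the unfolding `succ` from `ι`. -/
def GoodRep (rep : LTL P → LTL P) (ι : LTL P) : Prop :=
  (∀ α, PropEquiv (rep α) α) ∧
  (∀ α β, PropEquiv α β → rep α = rep β) ∧
  (rep .tt = .tt) ∧ (rep .ff = .ff) ∧
  (∀ φ, Relation.ReflTransGen (StepRep rep) ι φ →
      φ = ι ∨ φ = .tt ∨ φ = .ff ∨ Relation.ReflTransGen StepRaw ι φ)

/-- Shift of an infinite word. -/
def shiftw (w : ℕ → (P → Prop)) (k : ℕ) : ℕ → (P → Prop) := fun n => w (n + k)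

/-- Standard LTL semantics over infinite words. -/
def Sat : (ℕ → (P → Prop)) → LTL P → Prop
  | _, .tt => True
  | _, .ff => False
  | w, .atom p => w 0 p
  | w, .not φ => ¬ Sat w φ
  | w, .and α β => Sat w α ∧ Sat w β
  | w, .or α β => Sat w α ∨ Sat w β
  | w, .imp α β => Sat w α → Sat w β
  | w, .iff α β => Sat w α ↔ Sat w β
  | w, .xor α β => ¬ (Sat w α ↔ Sat w β)
  | w, .next φ => Sat (shiftw w 1) φ
  | w, .until_ α β => ∃ i, Sat (shiftw w i) β ∧ ∀ j < i, Sat (shiftw w j) α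
  | w, .wuntil α β =>
      (∃ i, Sat (shiftw w i) β ∧ ∀ j < i, Sat (shiftw w j) α) ∨ ∀ i, Sat (shiftw w i) α
  | w, .muntil α β =>
      ∃ i, (Sat (shiftw w i) α ∧ Sat (shiftw w i) β) ∧ ∀ j < i, Sat (shiftw w j) β
  | w, .release α β => ∀ i, Sat (shiftw w i) β ∨ ∃ j < i, Sat (shiftw w j) α
  | w, .ev φ => ∃ i, Sat (shiftw w i) φ
  | w, .always φ => ∀ i, Sat (shiftw w i) φ

/-- X-nesting depth. -/
def xdepth : LTL P → ℕ
  | .not φ => xdepth φ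
  | .and α β => max (xdepth α) (xdepth β)
  | .or α β => max (xdepth α) (xdepth β)
  | .imp α β => max (xdepth α) (xdepth β)
  | .iff α β => max (xdepth α) (xdepth β)
  | .xor α β => max (xdepth α) (xdepth β)
  | .next φ => xdepth φ + 1
  | _ => 0

/-- Size of a formula. -/
def size : LTL P → ℕ
  | .tt => 1
  | .ff => 1
  | .atom _ => 1
  | .not φ => size φ + 1
  | .and α β => size α + size β + 1
  | .or α β => size α + size β + 1
  | .imp α β => size α + size β + 1
  | .iff α β => size α + size β + 1
  | .xor α β => size α + size β + 1
  | .next φ => size φ + 1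
  | .until_ α β => size α + size β + 1
  | .wuntil α β => size α + size β + 1
  | .muntil α β => size α + size β + 1
  | .release α β => size α + size β + 1
  | .ev φ => size φ + 1
  | .always φ => size φ + 1

/-- Iterated application of the syntactic successor. -/
def iterSucc (vs : ℕ → P → Bool) (φ : LTL P) : ℕ → LTL P
  | 0 => φ
  | n + 1 => succ (vs n) (iterSucc vs φ n)

/-- The run of the automaton `D_ι` (with representative function `rep`) on
the infinite word `w`. -/
def runRep (rep : LTL P → LTL P) (ι : LTL P) (w : ℕ → P → Bool) : ℕ → LTL P
  | 0 => ι
  | n + 1 => rep (succ (w n) (runRep rep ι w n))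

end LTL

namespace LTL

variable {P : Type}

lemma isConst_iff {φ : LTL P} : IsConst φ ↔ φ = .tt ∨ φ = .ff := by
  cases φ <;> simp [IsConst]

lemma succ_of_isConst (v : P → Bool) {φ : LTL P} (h : IsConst φ) : succ v φ = φ := by
  rcases isConst_iff.mp h with rfl | rfl <;> rfl

section SmartConstructors

variable (a b : LTL P)

lemma mkNot_cases : mkNot a = .tt ∨ mkNot a = .ff ∨ (¬ IsConst a ∧ mkNot a = .not a) := by
  cases a <;> simp [mkNot, IsConst]

lemma mkAnd_cases :
    mkAnd a b = .ff ∨ mkAnd a b = a ∨ mkAnd a b = b ∨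
      (¬ IsConst a ∧ ¬ IsConst b ∧ mkAnd a b = .and a b) := by
  cases a <;> cases b <;> simp [mkAnd, IsConst]

lemma mkOr_cases :
    mkOr a b = .tt ∨ mkOr a b = a ∨ mkOr a b = b ∨
      (¬ IsConst a ∧ ¬ IsConst b ∧ mkOr a b = .or a b) := by
  cases a <;> cases b <;> simp [mkOr, IsConst]

lemma mkImp_cases :
    mkImp a b = .tt ∨ mkImp a b = b ∨ (¬ IsConst a ∧ mkImp a b = .not a) ∨
      (¬ IsConst a ∧ ¬ IsConst b ∧ mkImp a b = .imp a b) := by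
  cases a <;> cases b <;> simp [mkImp, mkNot, IsConst]

lemma mkIff_cases :
    mkIff a b = .tt ∨ mkIff a b = .ff ∨ mkIff a b = a ∨ mkIff a b = b ∨
      (¬ IsConst a ∧ mkIff a b = .not a) ∨ (¬ IsConst b ∧ mkIff a b = .not b) ∨
      (¬ IsConst a ∧ ¬ IsConst b ∧ mkIff a b = .iff a b) := by
  cases a <;> cases b <;> simp [mkIff, mkNot, IsConst]

lemma mkXor_cases :
    mkXor a b = .tt ∨ mkXor a b = .ff ∨ mkXor a b = a ∨ mkXor a b = b ∨
      (¬ IsConst a ∧ mkXor a b = .not a) ∨ (¬ IsConst b ∧ mkXor a b = .not b) ∨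
      (¬ IsConst a ∧ ¬ IsConst b ∧ mkXor a b = .xor a b) := by
  cases a <;> cases b <;> simp [mkXor, mkNot, IsConst]

lemma xdepth_mkNot : xdepth (mkNot a) = xdepth a := by
  cases a <;> rfl

lemma xdepth_mkAnd_le : xdepth (mkAnd a b) ≤ max (xdepth a) (xdepth b) := by
  rcases mkAnd_cases a b with h | h | h | ⟨-, -, h⟩ <;> rw [h] <;> simp [xdepth]

lemma xdepth_mkOr_le : xdepth (mkOr a b) ≤ max (xdepth a) (xdepth b) := by
  rcases mkOr_cases a b with h | h | h | ⟨-, -, h⟩ <;> rw [h] <;> simp [xdepth]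

lemma xdepth_mkImp_le : xdepth (mkImp a b) ≤ max (xdepth a) (xdepth b) := by
  rcases mkImp_cases a b with h | h | ⟨-, h⟩ | ⟨-, -, h⟩ <;> rw [h] <;> simp [xdepth]

lemma xdepth_mkIff_le : xdepth (mkIff a b) ≤ max (xdepth a) (xdepth b) := by
  rcases mkIff_cases a b with h | h | h | h | ⟨-, h⟩ | ⟨-, h⟩ | ⟨-, -, h⟩ <;> rw [h] <;>
    simp [xdepth]

lemma xdepth_mkXor_le : xdepth (mkXor a b) ≤ max (xdepth a) (xdepth b) := by
  rcases mkXor_cases a b with h | h | h | h | ⟨-, h⟩ | ⟨-, h⟩ | ⟨-, -, h⟩ <;> rw [h] <;>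
    simp [xdepth]

variable {a b}

lemma IsConst.mkNot (ha : IsConst a) : IsConst (mkNot a) := by
  rcases isConst_iff.1 ha with rfl | rfl <;> trivial

lemma IsConst.mkAnd (ha : IsConst a) (hb : IsConst b) : IsConst (mkAnd a b) := by
  rcases isConst_iff.1 ha with rfl | rfl <;> rcases isConst_iff.1 hb with rfl | rfl <;> trivial

lemma IsConst.mkOr (ha : IsConst a) (hb : IsConst b) : IsConst (mkOr a b) := by
  rcases isConst_iff.1 ha with rfl | rfl <;> rcases isConst_iff.1 hb with rfl | rfl <;> trivial

lemma IsConst.mkImp (ha : IsConst a) (hb : IsConst b) : IsConst (mkImp a b) := by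
  rcases isConst_iff.1 ha with rfl | rfl <;> rcases isConst_iff.1 hb with rfl | rfl <;> trivial

lemma IsConst.mkIff (ha : IsConst a) (hb : IsConst b) : IsConst (mkIff a b) := by
  rcases isConst_iff.1 ha with rfl | rfl <;> rcases isConst_iff.1 hb with rfl | rfl <;> trivial

lemma IsConst.mkXor (ha : IsConst a) (hb : IsConst b) : IsConst (mkXor a b) := by
  rcases isConst_iff.1 ha with rfl | rfl <;> rcases isConst_iff.1 hb with rfl | rfl <;> trivial

end SmartConstructors

section Closure

variable {a b : LTL P}

lemma IsB.mkNot (ha : IsB a) : IsB (mkNot a) := by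
  rcases mkNot_cases a with h | h | ⟨-, h⟩ <;> rw [h]
  exacts [.tt, .ff, .not ha]

lemma IsB.mkAnd (ha : IsB a) (hb : IsB b) : IsB (mkAnd a b) := by
  rcases mkAnd_cases a b with h | h | h | ⟨-, -, h⟩ <;> rw [h]
  exacts [.ff, ha, hb, .and ha hb]

lemma IsB.mkOr (ha : IsB a) (hb : IsB b) : IsB (mkOr a b) := by
  rcases mkOr_cases a b with h | h | h | ⟨-, -, h⟩ <;> rw [h]
  exacts [.tt, ha, hb, .or ha hb]

lemma IsB.mkImp (ha : IsB a) (hb : IsB b) : IsB (mkImp a b) := by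
  rcases mkImp_cases a b with h | h | ⟨-, h⟩ | ⟨-, -, h⟩ <;> rw [h]
  exacts [.tt, hb, .not ha, .imp ha hb]

lemma IsB.mkIff (ha : IsB a) (hb : IsB b) : IsB (mkIff a b) := by
  rcases mkIff_cases a b with h | h | h | h | ⟨-, h⟩ | ⟨-, h⟩ | ⟨-, -, h⟩ <;> rw [h]
  exacts [.tt, .ff, ha, hb, .not ha, .not hb, .iff ha hb]

lemma IsB.mkXor (ha : IsB a) (hb : IsB b) : IsB (mkXor a b) := by
  rcases mkXor_cases a b with h | h | h | h | ⟨-, h⟩ | ⟨-, h⟩ | ⟨-, -, h⟩ <;> rw [h]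
  exacts [.tt, .ff, ha, hb, .not ha, .not hb, .xor ha hb]

lemma IsG.mkNot (ha : IsS a) : IsG (mkNot a) := by
  rcases mkNot_cases a with h | h | ⟨-, h⟩ <;> rw [h]
  exacts [.ofB .tt, .ofB .ff, .notS ha]

lemma IsG.mkAnd (ha : IsG a) (hb : IsG b) : IsG (mkAnd a b) := by
  rcases mkAnd_cases a b with h | h | h | ⟨-, -, h⟩ <;> rw [h]
  exacts [.ofB .ff, ha, hb, .and ha hb]

lemma IsG.mkOr (ha : IsG a) (hb : IsG b) : IsG (mkOr a b) := by
  rcases mkOr_cases a b with h | h | h | ⟨-, -, h⟩ <;> rw [h]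
  exacts [.ofB .tt, ha, hb, .or ha hb]

lemma IsG.mkImp (ha : IsS a) (hb : IsG b) : IsG (mkImp a b) := by
  rcases mkImp_cases a b with h | h | ⟨-, h⟩ | ⟨-, -, h⟩ <;> rw [h]
  exacts [.ofB .tt, hb, .notS ha, .impS ha hb]

lemma IsS.mkNot (ha : IsG a) : IsS (mkNot a) := by
  rcases mkNot_cases a with h | h | ⟨-, h⟩ <;> rw [h]
  exacts [.ofB .tt, .ofB .ff, .notG ha]

lemma IsS.mkAnd (ha : IsS a) (hb : IsS b) : IsS (mkAnd a b) := by
  rcases mkAnd_cases a b with h | h | h | ⟨-, -, h⟩ <;> rw [h]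
  exacts [.ofB .ff, ha, hb, .and ha hb]

lemma IsS.mkOr (ha : IsS a) (hb : IsS b) : IsS (mkOr a b) := by
  rcases mkOr_cases a b with h | h | h | ⟨-, -, h⟩ <;> rw [h]
  exacts [.ofB .tt, ha, hb, .or ha hb]

lemma IsS.mkImp (ha : IsG a) (hb : IsS b) : IsS (mkImp a b) := by
  rcases mkImp_cases a b with h | h | ⟨-, h⟩ | ⟨-, -, h⟩ <;> rw [h]
  exacts [.ofB .tt, hb, .notG ha, .impG ha hb]

lemma NoConst.mkNot (ha : NoConst a) : NoConst (mkNot a) := by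
  rcases mkNot_cases a with h | h | ⟨hc, h⟩ <;> rw [h] <;> trivial

lemma NoConst.mkAnd (ha : NoConst a) (hb : NoConst b) : NoConst (mkAnd a b) := by
  rcases mkAnd_cases a b with h | h | h | ⟨hca, hcb, h⟩ <;> rw [h] <;> trivial

lemma NoConst.mkOr (ha : NoConst a) (hb : NoConst b) : NoConst (mkOr a b) := by
  rcases mkOr_cases a b with h | h | h | ⟨hca, hcb, h⟩ <;> rw [h] <;> trivial

lemma NoConst.mkImp (ha : NoConst a) (hb : NoConst b) : NoConst (mkImp a b) := by
  rcases mkImp_cases a b with h | h | ⟨hca, h⟩ | ⟨hca, hcb, h⟩ <;> rw [h] <;> trivial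

lemma NoConst.mkIff (ha : NoConst a) (hb : NoConst b) : NoConst (mkIff a b) := by
  rcases mkIff_cases a b with h | h | h | h | ⟨hca, h⟩ | ⟨hcb, h⟩ | ⟨hca, hcb, h⟩ <;>
    rw [h] <;> trivial

lemma NoConst.mkXor (ha : NoConst a) (hb : NoConst b) : NoConst (mkXor a b) := by
  rcases mkXor_cases a b with h | h | h | h | ⟨hca, h⟩ | ⟨hcb, h⟩ | ⟨hca, hcb, h⟩ <;>
    rw [h] <;> trivial

end Closure

section Unfolding

variable (v : P → Bool)

lemma IsB.succ {φ : LTL P} (h : IsB φ) : IsB (LTL.succ v φ) := by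
  induction h with
  | tt => exact .tt
  | ff => exact .ff
  | atom p => unfold LTL.succ; split <;> constructor
  | not _ ih => exact ih.mkNot
  | and _ _ iha ihb => exact iha.mkAnd ihb
  | or _ _ iha ihb => exact iha.mkOr ihb
  | imp _ _ iha ihb => exact iha.mkImp ihb
  | iff _ _ iha ihb => exact iha.mkIff ihb
  | xor _ _ iha ihb => exact iha.mkXor ihb
  | next h _ => exact h

mutual

theorem IsG.succ : ∀ {φ : LTL P}, IsG φ → IsG (LTL.succ v φ)
  | _, .ofB h => .ofB (h.succ v)
  | _, .notS h => .mkNot h.succ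
  | _, .and ha hb => .mkAnd ha.succ hb.succ
  | _, .or ha hb => .mkOr ha.succ hb.succ
  | _, .impS ha hb => .mkImp ha.succ hb.succ
  | _, .next h => h
  | _, .ev h => .mkOr h.succ (.ev h)
  | _, .until_ ha hb => .mkOr hb.succ (.mkAnd ha.succ (.until_ ha hb))
  | _, .muntil ha hb => .mkAnd hb.succ (.mkOr ha.succ (.muntil ha hb))

theorem IsS.succ : ∀ {φ : LTL P}, IsS φ → IsS (LTL.succ v φ)
  | _, .ofB h => .ofB (h.succ v)
  | _, .notG h => .mkNot h.succ
  | _, .and ha hb => .mkAnd ha.succ hb.succ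
  | _, .or ha hb => .mkOr ha.succ hb.succ
  | _, .impG ha hb => .mkImp ha.succ hb.succ
  | _, .next h => h
  | _, .always h => .mkAnd h.succ (.always h)
  | _, .release ha hb => .mkAnd hb.succ (.mkOr ha.succ (.release ha hb))
  | _, .wuntil ha hb => .mkOr hb.succ (.mkAnd ha.succ (.wuntil ha hb))

end

lemma NoConst.succ {φ : LTL P} (h : NoConst φ) : NoConst (succ v φ) := by
  induction φ with
  | tt | ff => exact h
  | atom p => unfold LTL.succ; split <;> trivial
  | not _ ih => exact (ih h.2).mkNot
  | and _ _ iha ihb => exact (iha h.1.2).mkAnd (ihb h.2.2)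
  | or _ _ iha ihb => exact (iha h.1.2).mkOr (ihb h.2.2)
  | imp _ _ iha ihb => exact (iha h.1.2).mkImp (ihb h.2.2)
  | iff _ _ iha ihb => exact (iha h.1.2).mkIff (ihb h.2.2)
  | xor _ _ iha ihb => exact (iha h.1.2).mkXor (ihb h.2.2)
  | next _ _ => exact h.2
  | until_ _ _ iha ihb | wuntil _ _ iha ihb => exact (ihb h.2.2).mkOr ((iha h.1.2).mkAnd h)
  | muntil _ _ iha ihb | release _ _ iha ihb => exact (ihb h.2.2).mkAnd ((iha h.1.2).mkOr h)
  | ev _ ih => exact (ih h.2).mkOr h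
  | always _ ih => exact (ih h.2).mkAnd h

end Unfolding

section Depth

lemma xdepth_binary_le {f : LTL P → LTL P → LTL P}
    (hle : ∀ a b, xdepth (f a b) ≤ max (xdepth a) (xdepth b))
    (hconst : ∀ {a b}, IsConst a → IsConst b → IsConst (f a b)) {a b : LTL P} {m n : ℕ}
    (ha : xdepth a ≤ m - 1 ∧ (m = 0 → IsConst a))
    (hb : xdepth b ≤ n - 1 ∧ (n = 0 → IsConst b)) :
    xdepth (f a b) ≤ max m n - 1 ∧ (max m n = 0 → IsConst (f a b)) := by
  refine ⟨(hle a b).trans (by omega), fun h => hconst (ha.2 (by omega)) (hb.2 (by omega))⟩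

lemma IsB.xdepth_succ (v : P → Bool) {φ : LTL P} (h : IsB φ) :
    xdepth (LTL.succ v φ) ≤ xdepth φ - 1 ∧ (xdepth φ = 0 → IsConst (LTL.succ v φ)) := by
  induction h with
  | tt | ff => exact ⟨Nat.zero_le _, fun _ => trivial⟩
  | atom p => unfold LTL.succ; split <;> exact ⟨Nat.zero_le _, fun _ => trivial⟩
  | not _ ih => exact ⟨(xdepth_mkNot _).trans_le ih.1, fun h => (ih.2 h).mkNot⟩
  | and _ _ iha ihb => exact xdepth_binary_le (f := LTL.mkAnd) xdepth_mkAnd_le IsConst.mkAnd iha ihb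
  | or _ _ iha ihb => exact xdepth_binary_le (f := LTL.mkOr) xdepth_mkOr_le IsConst.mkOr iha ihb
  | imp _ _ iha ihb => exact xdepth_binary_le (f := LTL.mkImp) xdepth_mkImp_le IsConst.mkImp iha ihb
  | iff _ _ iha ihb => exact xdepth_binary_le (f := LTL.mkIff) xdepth_mkIff_le IsConst.mkIff iha ihb
  | xor _ _ iha ihb => exact xdepth_binary_le (f := LTL.mkXor) xdepth_mkXor_le IsConst.mkXor iha ihb
  | next _ _ => exact ⟨le_rfl, nofun⟩

lemma IsB.isConst_succ_or_xdepth_succ_lt (v : P → Bool) {φ : LTL P} (h : IsB φ) :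
    IsConst (LTL.succ v φ) ∨ xdepth (LTL.succ v φ) < xdepth φ := by
  obtain ⟨hle, hzero⟩ := h.xdepth_succ v
  rcases Nat.eq_zero_or_pos (xdepth φ) with h0 | hpos
  · exact .inl (hzero h0)
  · exact .inr (by omega)

end Depth

section Acceptance

lemma IsB.lam_eq_none {φ : LTL P} (h : IsB φ) (hNC : NoConst φ) (hc : ¬ IsConst φ) :
    lam φ = none := by
  induction h with
  | tt | ff => exact absurd trivial hc
  | atom p => rfl
  | not _ ih => simp only [lam, ih hNC.2 hNC.1]; rfl
  | and _ _ iha ihb | or _ _ iha ihb | imp _ _ iha ihb | iff _ _ iha ihb | xor _ _ iha ihb =>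
    simp only [lam, iha hNC.1.2 hNC.1.1, ihb hNC.2.2 hNC.2.1]; rfl
  | next _ ih => exact ih hNC.2 hNC.1

mutual

theorem IsG.isB_or_lam_eq_false : ∀ {φ : LTL P}, IsG φ → NoConst φ → ¬ IsConst φ →
    (IsB φ ∧ lam φ = none) ∨ lam φ = some false
  | _, .ofB h, hNC, hc => .inl ⟨h, h.lam_eq_none hNC hc⟩
  | _, .notS h, ⟨hc, hNC⟩, _ => by
    rcases h.isB_or_lam_eq_true hNC hc with ⟨hB, h1⟩ | h1
    · exact .inl ⟨hB.not, by simp only [lam, h1]; rfl⟩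
    · exact .inr (by simp only [lam, h1]; rfl)
  | _, .and ha hb, ⟨⟨hca, hna⟩, hcb, hnb⟩, _ => by
    rcases ha.isB_or_lam_eq_false hna hca with ⟨hBa, h1⟩ | h1 <;>
      rcases hb.isB_or_lam_eq_false hnb hcb with ⟨hBb, h2⟩ | h2
    · exact .inl ⟨hBa.and hBb, by simp only [lam, h1, h2]; rfl⟩
    all_goals exact .inr (by simp only [lam, h1, h2]; rfl)
  | _, .or ha hb, ⟨⟨hca, hna⟩, hcb, hnb⟩, _ => by
    rcases ha.isB_or_lam_eq_false hna hca with ⟨hBa, h1⟩ | h1 <;>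
      rcases hb.isB_or_lam_eq_false hnb hcb with ⟨hBb, h2⟩ | h2
    · exact .inl ⟨hBa.or hBb, by simp only [lam, h1, h2]; rfl⟩
    all_goals exact .inr (by simp only [lam, h1, h2]; rfl)
  | _, .impS ha hb, ⟨⟨hca, hna⟩, hcb, hnb⟩, _ => by
    rcases ha.isB_or_lam_eq_true hna hca with ⟨hBa, h1⟩ | h1 <;>
      rcases hb.isB_or_lam_eq_false hnb hcb with ⟨hBb, h2⟩ | h2
    · exact .inl ⟨hBa.imp hBb, by simp only [lam, h1, h2]; rfl⟩
    all_goals exact .inr (by simp only [lam, h1, h2]; rfl)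
  | _, .next h, ⟨hc, hNC⟩, _ => by
    rcases h.isB_or_lam_eq_false hNC hc with ⟨hB, h1⟩ | h1
    · exact .inl ⟨hB.next, h1⟩
    · exact .inr h1
  | _, .ev _, _, _ | _, .until_ _ _, _, _ | _, .muntil _ _, _, _ => .inr rfl

theorem IsS.isB_or_lam_eq_true : ∀ {φ : LTL P}, IsS φ → NoConst φ → ¬ IsConst φ →
    (IsB φ ∧ lam φ = none) ∨ lam φ = some true
  | _, .ofB h, hNC, hc => .inl ⟨h, h.lam_eq_none hNC hc⟩
  | _, .notG h, ⟨hc, hNC⟩, _ => by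
    rcases h.isB_or_lam_eq_false hNC hc with ⟨hB, h1⟩ | h1
    · exact .inl ⟨hB.not, by simp only [lam, h1]; rfl⟩
    · exact .inr (by simp only [lam, h1]; rfl)
  | _, .and ha hb, ⟨⟨hca, hna⟩, hcb, hnb⟩, _ => by
    rcases ha.isB_or_lam_eq_true hna hca with ⟨hBa, h1⟩ | h1 <;>
      rcases hb.isB_or_lam_eq_true hnb hcb with ⟨hBb, h2⟩ | h2
    · exact .inl ⟨hBa.and hBb, by simp only [lam, h1, h2]; rfl⟩
    all_goals exact .inr (by simp only [lam, h1, h2]; rfl)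
  | _, .or ha hb, ⟨⟨hca, hna⟩, hcb, hnb⟩, _ => by
    rcases ha.isB_or_lam_eq_true hna hca with ⟨hBa, h1⟩ | h1 <;>
      rcases hb.isB_or_lam_eq_true hnb hcb with ⟨hBb, h2⟩ | h2
    · exact .inl ⟨hBa.or hBb, by simp only [lam, h1, h2]; rfl⟩
    all_goals exact .inr (by simp only [lam, h1, h2]; rfl)
  | _, .impG ha hb, ⟨⟨hca, hna⟩, hcb, hnb⟩, _ => by
    rcases ha.isB_or_lam_eq_false hna hca with ⟨hBa, h1⟩ | h1 <;>
      rcases hb.isB_or_lam_eq_true hnb hcb with ⟨hBb, h2⟩ | h2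
    · exact .inl ⟨hBa.imp hBb, by simp only [lam, h1, h2]; rfl⟩
    all_goals exact .inr (by simp only [lam, h1, h2]; rfl)
  | _, .next h, ⟨hc, hNC⟩, _ => by
    rcases h.isB_or_lam_eq_true hNC hc with ⟨hB, h1⟩ | h1
    · exact .inl ⟨hB.next, h1⟩
    · exact .inr h1
  | _, .always _, _, _ | _, .release _ _, _, _ | _, .wuntil _ _, _, _ => .inr rfl

end

end Acceptance

section PropositionalEquivalence

variable (ν : LTL P → Prop) (a b : LTL P)

lemma evalB_mkNot : evalB ν (mkNot a) ↔ ¬ evalB ν a := by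
  cases a <;> simp [mkNot, evalB]

lemma evalB_mkAnd : evalB ν (mkAnd a b) ↔ evalB ν a ∧ evalB ν b := by
  cases a <;> cases b <;> simp [mkAnd, evalB]

lemma evalB_mkOr : evalB ν (mkOr a b) ↔ evalB ν a ∨ evalB ν b := by
  cases a <;> cases b <;> simp [mkOr, evalB]

lemma evalB_mkImp : evalB ν (mkImp a b) ↔ (evalB ν a → evalB ν b) := by
  cases a <;> cases b <;> simp [mkImp, mkNot, evalB]

lemma evalB_mkIff : evalB ν (mkIff a b) ↔ (evalB ν a ↔ evalB ν b) := by
  cases a <;> cases b <;> simp [mkIff, mkNot, evalB]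

lemma evalB_mkXor : evalB ν (mkXor a b) ↔ ¬ (evalB ν a ↔ evalB ν b) := by
  cases a <;> cases b <;> simp [mkXor, mkNot, evalB] <;> tauto

/-- Unfolding commutes with Boolean evaluation: the Boolean variables of `succ v φ` are
evaluated through the unfoldings of the Boolean variables of `φ`. -/
lemma evalB_succ (v : P → Bool) (φ : LTL P) :
    evalB ν (succ v φ) ↔ evalB (fun χ => evalB ν (succ v χ)) φ := by
  induction φ with
  | not _ ih => simp only [succ, evalB, evalB_mkNot, ih]
  | and _ _ iha ihb => simp only [succ, evalB, evalB_mkAnd, iha, ihb]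
  | or _ _ iha ihb => simp only [succ, evalB, evalB_mkOr, iha, ihb]
  | imp _ _ iha ihb => simp only [succ, evalB, evalB_mkImp, iha, ihb]
  | iff _ _ iha ihb => simp only [succ, evalB, evalB_mkIff, iha, ihb]
  | xor _ _ iha ihb => simp only [succ, evalB, evalB_mkXor, iha, ihb]
  | _ => rfl

variable {a b}

lemma PropEquiv.symm (h : PropEquiv a b) : PropEquiv b a := fun ν => (h ν).symm

lemma PropEquiv.trans {c : LTL P} (h : PropEquiv a b) (h' : PropEquiv b c) : PropEquiv a c :=
  fun ν => (h ν).trans (h' ν)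

lemma PropEquiv.succ (h : PropEquiv a b) (v : P → Bool) :
    PropEquiv (LTL.succ v a) (LTL.succ v b) := fun ν =>
  (evalB_succ ν v a).trans ((h _).trans (evalB_succ ν v b).symm)

end PropositionalEquivalence

section Cycles

variable {rep : LTL P → LTL P}

lemma StepRep.exists_propEquiv_succ (hrep : ∀ α, PropEquiv (rep α) α) {α β χ : LTL P}
    (hst : StepRep rep α β) (he : PropEquiv χ α) : ∃ v, PropEquiv (succ v χ) β := by
  obtain ⟨v, rfl⟩ := hst
  exact ⟨v, (he.succ v).trans (hrep _).symm⟩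

lemma exists_isB_propEquiv_of_transGen (hrep : ∀ α, PropEquiv (rep α) α) {α β χ : LTL P}
    (h : Relation.TransGen (StepRep rep) α β) (hB : IsB χ) (he : PropEquiv χ α) :
    ∃ χ', IsB χ' ∧ PropEquiv χ' β ∧ (IsConst χ' ∨ xdepth χ' < xdepth χ) := by
  induction h with
  | single hst =>
    obtain ⟨v, hv⟩ := hst.exists_propEquiv_succ hrep he
    exact ⟨_, hB.succ v, hv, hB.isConst_succ_or_xdepth_succ_lt v⟩
  | tail _ hst ih =>
    obtain ⟨χ₁, hB₁, he₁, hd₁⟩ := ih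
    obtain ⟨v, hv⟩ := hst.exists_propEquiv_succ hrep he₁
    refine ⟨_, hB₁.succ v, hv, ?_⟩
    rcases hd₁ with hc | hlt
    · exact .inl (by rwa [succ_of_isConst v hc])
    · exact (hB₁.isConst_succ_or_xdepth_succ_lt v).imp_right (·.trans hlt)

lemma exists_isConst_propEquiv_of_cycle (hrep : ∀ α, PropEquiv (rep α) α) {φ : LTL P}
    (cyc : Relation.TransGen (StepRep rep) φ φ) {χ : LTL P} (hB : IsB χ)
    (he : PropEquiv χ φ) : ∃ c, IsConst c ∧ PropEquiv c φ := by
  obtain ⟨χ', hB', he', hc | _⟩ := exists_isB_propEquiv_of_transGen hrep cyc hB he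
  · exact ⟨χ', hc, he'⟩
  · exact exists_isConst_propEquiv_of_cycle hrep cyc hB' he'
termination_by xdepth χ

lemma eq_tt_or_eq_ff_of_cycle (hrep : ∀ α, PropEquiv (rep α) α)
    (hcanon : ∀ α β, PropEquiv α β → rep α = rep β)
    (htt : rep .tt = .tt) (hff : rep .ff = .ff) {φ : LTL P}
    (cyc : Relation.TransGen (StepRep rep) φ φ) (hB : IsB φ) : φ = .tt ∨ φ = .ff := by
  obtain ⟨c, hc, hce⟩ := exists_isConst_propEquiv_of_cycle hrep cyc hB fun _ => Iff.rfl
  obtain ⟨ψ, -, v, hv⟩ := Relation.TransGen.tail'_iff.mp cyc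
  have hφ : PropEquiv φ (succ v ψ) := by rw [← hv]; exact hrep _
  have hrep_c : rep c = φ := by rw [← hv]; exact hcanon _ _ (hce.trans hφ)
  rcases isConst_iff.mp hc with rfl | rfl
  · exact .inl (hrep_c.symm.trans htt)
  · exact .inr (hrep_c.symm.trans hff)

end Cycles

lemma reachable_invariant {rep : LTL P → LTL P} {ι : LTL P}
    (hreach : ∀ φ, Relation.ReflTransGen (StepRep rep) ι φ →
      φ = ι ∨ φ = .tt ∨ φ = .ff ∨ Relation.ReflTransGen StepRaw ι φ)
    {p : LTL P → Prop} (hι : p ι) (htt : p .tt) (hff : p .ff)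
    (hsucc : ∀ v ψ, p ψ → p (succ v ψ)) {φ : LTL P}
    (h : Relation.ReflTransGen (StepRep rep) ι φ) : p φ := by
  rcases hreach φ h with rfl | rfl | rfl | hraw
  · exact hι
  · exact htt
  · exact hff
  · clear h
    induction hraw with
    | refl => exact hι
    | tail _ hst ih => obtain ⟨v, rfl⟩ := hst; exact hsucc v _ ih

end LTL

/-- for a syntactic guarantee `ι`, every state `φ ≠ tt` of `D_ι`
that belongs to a non-trivial SCC satisfies `λ(φ) = ⊥`; dually, for a
syntactic safety `ι`, every state `φ ≠ ff` of `D_ι` in a non-trivial SCC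
satisfies `λ(φ) = ⊤`. -/
theorem stmt3 {P : Type} :
    (∀ (rep : LTL P → LTL P) (ι : LTL P), LTL.GoodRep rep ι →
      LTL.IsG ι → LTL.NoConst ι →
      ∀ φ : LTL P, Relation.ReflTransGen (LTL.StepRep rep) ι φ →
        Relation.TransGen (LTL.StepRep rep) φ φ →
        φ ≠ LTL.tt → LTL.lam φ = some false) ∧
    (∀ (rep : LTL P → LTL P) (ι : LTL P), LTL.GoodRep rep ι →
      LTL.IsS ι → LTL.NoConst ι →
      ∀ φ : LTL P, Relation.ReflTransGen (LTL.StepRep rep) ι φ →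
        Relation.TransGen (LTL.StepRep rep) φ φ →
        φ ≠ LTL.ff → LTL.lam φ = some true) := by
  constructor
  · rintro rep ι ⟨hrep, hcanon, htt, hff, hreach⟩ hG hNC φ reach cyc hne
    by_cases hφff : φ = .ff
    · subst hφff; rfl
    have hc : ¬ LTL.IsConst φ := by rw [LTL.isConst_iff]; tauto
    obtain ⟨hGφ, hNCφ⟩ : LTL.IsG φ ∧ LTL.NoConst φ :=
      LTL.reachable_invariant (p := fun ψ => LTL.IsG ψ ∧ LTL.NoConst ψ) hreach ⟨hG, hNC⟩
        ⟨.ofB .tt, trivial⟩ ⟨.ofB .ff, trivial⟩ (fun v _ h => h.imp (·.succ v) (·.succ v))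
        reach
    refine (hGφ.isB_or_lam_eq_false hNCφ hc).resolve_left fun ⟨hB, _⟩ => ?_
    rcases LTL.eq_tt_or_eq_ff_of_cycle hrep hcanon htt hff cyc hB with h | h
    exacts [hne h, hφff h]
  · rintro rep ι ⟨hrep, hcanon, htt, hff, hreach⟩ hS hNC φ reach cyc hne
    by_cases hφtt : φ = .tt
    · subst hφtt; rfl
    have hc : ¬ LTL.IsConst φ := by rw [LTL.isConst_iff]; tauto
    obtain ⟨hSφ, hNCφ⟩ : LTL.IsS φ ∧ LTL.NoConst φ :=
      LTL.reachable_invariant (p := fun ψ => LTL.IsS ψ ∧ LTL.NoConst ψ) hreach ⟨hS, hNC⟩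
        ⟨.ofB .tt, trivial⟩ ⟨.ofB .ff, trivial⟩ (fun v _ h => h.imp (·.succ v) (·.succ v))
        reach
    refine (hSφ.isB_or_lam_eq_true hNCφ hc).resolve_left fun ⟨hB, _⟩ => ?_
    rcases LTL.eq_tt_or_eq_ff_of_cycle hrep hcanon htt hff cyc hB with h | h
    exacts [hφtt h, hne h]
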